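/- arXiv:1801.03612 — 5 statements merged into one kernel-verified Lean document; each statement's English description precedes it below -/
import Mathlib

section
/- Absolute continuity of the extended distributions: if π(z) > 0 implies p(z;x) > 0, and p(τ;x,z) > 0 implies p(τ;x) > 0 for all τ ≅_O z, then π(z, τ_{1:K}) > 0 implies q(z, τ_{1:K}) > 0, where π and q are the extended target and extended proposal distributions. -/
/-! Positivity of `π(z) ∏ᵢ p(τᵢ;x,z)` forces every factor `p(τᵢ;x,z)` to be positive, hence
every `τᵢ ≅_O z` and every `p(τᵢ;x) > 0`; so each of the `K ≥ 1` summands of `q` is positive. -/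

theorem Finset.pos_of_mul_prod_pos {ι R : Type*} [CommMonoidWithZero R] [PartialOrder R]
    [NoZeroDivisors R] [Nontrivial R] {s : Finset ι} {f : ι → R} {a : R}
    (hf : ∀ i ∈ s, 0 ≤ f i) (h : 0 < a * ∏ i ∈ s, f i) {i : ι} (hi : i ∈ s) : 0 < f i :=
  (hf i hi).lt_of_ne' (Finset.prod_ne_zero_iff.mp (right_ne_zero_of_mul h.ne') i hi)

theorem stmt7_absolute_continuity_general
    {Z T : Type} [DecidableEq Z]
    (K : ℕ) (hK : 0 < K)
    (p : T → ℝ) (out : T → Z) (pz : Z → T → ℝ) (pi : Z → ℝ)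
    (hpz_nonneg : ∀ z τ, 0 ≤ pz z τ)
    (hpz_supp : ∀ z τ, 0 < pz z τ → out τ = z)
    (habs : ∀ z τ, 0 < pz z τ → 0 < p τ) :
    ∀ (z : Z) (t : Fin K → T),
      0 < pi z * ∏ i, pz z (t i) →
      0 < (if ∀ j, out (t j) = z then
            (K : ℝ)⁻¹ * ∑ k, p (t k) * ∏ i ∈ Finset.univ.erase k, pz z (t i)
          else 0) := by
  intro z t h
  have hpz_pos : ∀ i, 0 < pz z (t i) := fun i =>
    Finset.pos_of_mul_prod_pos (fun i _ => hpz_nonneg z (t i)) h (Finset.mem_univ i)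
  rw [if_pos fun j => hpz_supp z (t j) (hpz_pos j)]
  have : Nonempty (Fin K) := ⟨⟨0, hK⟩⟩
  refine mul_pos (inv_pos.mpr (Nat.cast_pos.mpr hK))
    (Finset.sum_pos (fun k _ => ?_) Finset.univ_nonempty)
  exact mul_pos (habs z (t k) (hpz_pos k)) (Finset.prod_pos fun i _ => hpz_pos i)

/-- Absolute continuity of the extended distributions.  If
`π(z) > 0 → p(z;x) > 0` (where `p(z;x) = ∑_{τ ≅_O z} p(τ;x)`), and
`p(τ;x,z) > 0 → p(τ;x) > 0` for all traces `τ ≅_O z`, then positivity of the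
extended target `π(z,τ_{1:K}) = π(z) ∏_i p(τ_i;x,z)` implies positivity of the
extended proposal `q(z,τ_{1:K}) = (1/K) ∑_k p(τ_k;x) ∏_{i≠k} p(τ_i;x,z)`
(defined to be `0` unless `τ_j ≅_O z` for all `j`).  Here
`p(τ;x,z) > 0 → out τ = z`. -/
theorem stmt7_absolute_continuity
    {Z T : Type} [Fintype Z] [Fintype T] [DecidableEq Z]
    (K : ℕ) (hK : 0 < K)
    (p : T → ℝ) (out : T → Z) (pz : Z → T → ℝ) (pi : Z → ℝ)
    (hp_nonneg : ∀ τ, 0 ≤ p τ)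
    (hpz_nonneg : ∀ z τ, 0 ≤ pz z τ)
    (hpz_supp : ∀ z τ, 0 < pz z τ → out τ = z)
    (hpi_abs : ∀ z, 0 < pi z →
      0 < ∑ τ ∈ Finset.univ.filter (fun τ => out τ = z), p τ)
    (habs : ∀ z τ, 0 < pz z τ → 0 < p τ) :
    ∀ (z : Z) (t : Fin K → T),
      0 < pi z * ∏ i, pz z (t i) →
      0 < (if ∀ j, out (t j) = z then
            (K : ℝ)⁻¹ * ∑ k, p (t k) * ∏ i ∈ Finset.univ.erase k, pz z (t i)
          else 0) :=
  stmt7_absolute_continuity_general K hK p out pz pi hpz_nonneg hpz_supp habs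
end

section
/- The Metropolis–Hastings acceptance ratio on the extended space simplifies: with z' = ζ, ζ' = z, ζ = τ_k|_O, ζ' = τ'_{k'}|_O, one has [π(z',ζ',k',τ'_{1:K}) q(z,ζ,k,τ_{1:K}; z',ζ',k',τ'_{1:K})] / [π(z,ζ,k,τ_{1:K}) q(z',ζ',k',τ'_{1:K}; z,ζ,k,τ_{1:K})] = [π(z')·(1/K)Σ_{j=1}^K p_O(τ'_j; ζ)] / [π(z)·(1/K)Σ_{j=1}^K p_O(τ_j; z)]. -/
/-!
Once the output constraint `out τ_k = ζ` is resolved, the extended target factors as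
`π(z) · Ẑ(z, τ) · q(k, τ; z, ζ)`, where `Ẑ(z, τ) = (1/K) ∑ⱼ p_O(τⱼ; z)` and `q` is the proposal
density of the traces and the selected index.  Since the move swaps `z` and `ζ`, the proposal
density of the reverse move is exactly the `q`-factor of the current state, and vice versa, so
both `q`-factors cancel crosswise from the acceptance ratio, leaving the ratio of the `π · Ẑ` factors.
-/

open Finset

namespace ExtendedMH

variable {Z T : Type*} {K : ℕ}

/-- The extended target at `(x, w, k, t)`; the factor `δ(w, out (t k))` is omitted, it is `1` at
the states considered. -/
noncomputable def extendedTarget (pi : Z → ℝ) (pp : Z → T → ℝ) (pc : Z → Z → T → ℝ)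
    (x w : Z) (k : Fin K) (t : Fin K → T) : ℝ :=
  pi x * ((K : ℝ)⁻¹ * pp x (t k)) * ∏ i ∈ univ.erase k, pc x w (t i)

noncomputable def traceProposal (pc : Z → Z → T → ℝ) (pO : Z → T → ℝ)
    (x w : Z) (k : Fin K) (t : Fin K → T) : ℝ :=
  (∏ j, pc x w (t j)) * (pO x (t k) / ∑ j, pO x (t j))

noncomputable def weightAverage (pO : Z → T → ℝ) (x : Z) (t : Fin K → T) : ℝ :=
  (K : ℝ)⁻¹ * ∑ j, pO x (t j)

lemma sum_weights_pos {pO : Z → T → ℝ} {x : Z} {t : Fin K → T} (k : Fin K)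
    (hpO : ∀ j, 0 < pO x (t j)) : 0 < ∑ j, pO x (t j) :=
  sum_pos (fun j _ => hpO j) ⟨k, mem_univ k⟩

lemma traceProposal_pos {pc : Z → Z → T → ℝ} {pO : Z → T → ℝ} {x w : Z} {k : Fin K}
    {t : Fin K → T} (hpc : ∀ j, 0 < pc x w (t j)) (hpO : ∀ j, 0 < pO x (t j)) :
    0 < traceProposal pc pO x w k t :=
  mul_pos (prod_pos fun j _ => hpc j) (div_pos (hpO k) (sum_weights_pos k hpO))

lemma extendedTarget_eq_mul_traceProposal {pi : Z → ℝ} {pp : Z → T → ℝ}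
    {pc : Z → Z → T → ℝ} {pO : Z → T → ℝ} {x w : Z} {k : Fin K} {t : Fin K → T}
    (hfact : pp x (t k) = pO x (t k) * pc x w (t k)) (hS : ∑ j, pO x (t j) ≠ 0) :
    extendedTarget pi pp pc x w k t = pi x * weightAverage pO x t * traceProposal pc pO x w k t := by
  have hprod : pc x w (t k) * ∏ i ∈ univ.erase k, pc x w (t i) = ∏ j, pc x w (t j) :=
    mul_prod_erase _ (fun i => pc x w (t i)) (mem_univ k)
  unfold extendedTarget weightAverage traceProposal
  rw [hfact, ← hprod]
  field_simp

end ExtendedMH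

open ExtendedMH in
theorem stmt9_mh_acceptance_ratio_general
    {Z T : Type}
    (K : ℕ)
    (pi : Z → ℝ) (out : T → Z)
    (pp : Z → T → ℝ) (pc : Z → Z → T → ℝ) (pO : Z → T → ℝ)
    (hfact : ∀ x w τ, out τ = w → pp x τ = pO x τ * pc x w τ)
    (z ζ z' ζ' : Z) (k k' : Fin K) (t t' : Fin K → T)
    (hz' : z' = ζ) (hζ' : ζ' = z)
    (hout_k : out (t k) = ζ) (hout_k' : out (t' k') = ζ')
    (hpc_t : ∀ i, 0 < pc z ζ (t i))
    (hpc_t' : ∀ i, 0 < pc z' ζ' (t' i))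
    (hpO_t : ∀ j, 0 < pO z (t j))
    (hpO_t' : ∀ j, 0 < pO z' (t' j)) :
    (pi z' * ((K : ℝ)⁻¹ * pp z' (t' k')) * (∏ i ∈ Finset.univ.erase k', pc z' ζ' (t' i))
        * ((∏ j, pc ζ' z' (t j)) * (pO z (t k) / ∑ j, pO z (t j))))
      / (pi z * ((K : ℝ)⁻¹ * pp z (t k)) * (∏ i ∈ Finset.univ.erase k, pc z ζ (t i))
        * ((∏ j, pc ζ z (t' j)) * (pO z' (t' k') / ∑ j, pO z' (t' j))))
    = (pi z' * ((K : ℝ)⁻¹ * ∑ j, pO z' (t' j)))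
      / (pi z * ((K : ℝ)⁻¹ * ∑ j, pO z (t j))) := by
  subst z' ζ'
  have hq : traceProposal pc pO z ζ k t ≠ 0 := (traceProposal_pos hpc_t hpO_t).ne'
  have hq' : traceProposal pc pO ζ z k' t' ≠ 0 := (traceProposal_pos hpc_t' hpO_t').ne'
  change extendedTarget pi pp pc ζ z k' t' * traceProposal pc pO z ζ k t
      / (extendedTarget pi pp pc z ζ k t * traceProposal pc pO ζ z k' t')
    = pi ζ * weightAverage pO ζ t' / (pi z * weightAverage pO z t)
  rw [extendedTarget_eq_mul_traceProposal (hfact _ _ _ hout_k')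
      (sum_weights_pos k' hpO_t').ne',
    extendedTarget_eq_mul_traceProposal (hfact _ _ _ hout_k) (sum_weights_pos k hpO_t).ne',
    mul_right_comm (pi z * _), mul_div_mul_right _ _ hq, mul_div_mul_right _ _ hq']

/-- The Metropolis–Hastings acceptance ratio on the extended space
simplifies.  Extended target
`π(z,ζ,k,τ_{1:K}) = π(z)·(1/K)·p(τ_k;z)·δ(ζ,τ_k|_O)·∏_{i≠k} p(τ_i;z,ζ)` and
extended proposal kernel
`q(z',ζ',k',τ'_{1:K}; z,ζ,k,τ_{1:K}) = δ(z';ζ)·δ(ζ';z)·(∏_j p(τ'_j;ζ,z))·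
p_O(τ'_{k'};ζ) / ∑_j p_O(τ'_j;ζ)`.  Here `pp x τ = p(τ;x)` is the program run on
input `x`, `pc x w τ = p(τ;x,w)` its distribution with outputs fixed to `w`,
`pO x τ = p_O(τ;x)`, with `pp x τ = pO x τ · pc x w τ` whenever `out τ = w`.
With `z' = ζ`, `ζ' = z`, `ζ = τ_k|_O`, `ζ' = τ'_{k'}|_O`, and all relevant
quantities positive, the ratio
`[π(z',ζ',k',τ') q(z,ζ,k,τ; z',ζ',k',τ')] / [π(z,ζ,k,τ) q(z',ζ',k',τ'; z,ζ,k,τ)]`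
equals `[π(z')·(1/K)∑_j p_O(τ'_j;ζ)] / [π(z)·(1/K)∑_j p_O(τ_j;z)]`. -/
theorem stmt9_mh_acceptance_ratio
    {Z T : Type} [Fintype Z] [Fintype T]
    (K : ℕ) (hK : 0 < K)
    (pi : Z → ℝ) (out : T → Z)
    (pp : Z → T → ℝ) (pc : Z → Z → T → ℝ) (pO : Z → T → ℝ)
    (hfact : ∀ x w τ, out τ = w → pp x τ = pO x τ * pc x w τ)
    (z ζ z' ζ' : Z) (k k' : Fin K) (t t' : Fin K → T)
    (hz' : z' = ζ) (hζ' : ζ' = z)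
    (hout_k : out (t k) = ζ) (hout_k' : out (t' k') = ζ')
    (hpi_z : 0 < pi z) (hpi_z' : 0 < pi z')
    (hpc_t : ∀ i, 0 < pc z ζ (t i))
    (hpc_t' : ∀ i, 0 < pc z' ζ' (t' i))
    (hpO_t : ∀ j, 0 < pO z (t j))
    (hpO_t' : ∀ j, 0 < pO z' (t' j)) :
    (pi z' * ((K : ℝ)⁻¹ * pp z' (t' k')) * (∏ i ∈ Finset.univ.erase k', pc z' ζ' (t' i))
        * ((∏ j, pc ζ' z' (t j)) * (pO z (t k) / ∑ j, pO z (t j))))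
      / (pi z * ((K : ℝ)⁻¹ * pp z (t k)) * (∏ i ∈ Finset.univ.erase k, pc z ζ (t i))
        * ((∏ j, pc ζ z (t' j)) * (pO z' (t' k') / ∑ j, pO z' (t' j))))
    = (pi z' * ((K : ℝ)⁻¹ * ∑ j, pO z' (t' j)))
      / (pi z * ((K : ℝ)⁻¹ * ∑ j, pO z (t j))) :=
  stmt9_mh_acceptance_ratio_general K pi out pp pc pO hfact z ζ z' ζ' k k' t t' hz' hζ' hout_k
    hout_k' hpc_t hpc_t' hpO_t hpO_t'
end

section
/- The transition operator of Algorithm 2 (Metropolis–Hastings with proposal probability estimates ξ̂', ξ̂_{t-1} computed from K auxiliary executions, and acceptance probability min{1, π̃(z')ξ̂_{t-1} / (π̃(z_{t-1})ξ̂')}) admits π as a stationary distribution: if z_{t-1} ~ π, then z_t ~ π. -/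
/-!
Algorithm 2 is an exact Metropolis–Hastings chain on the extended space of `(z, k, τ, τ')`.
After summing out the uniform index `k`, the flux `π(z) · q(z → ζ; τ, τ') · α` of accepted
moves equals `∏ᵢ p(τᵢ; z, ζ) · ∏ⱼ p(τ'ⱼ; ζ, z) · min (π(z) ξ̂(z; τ)) (π(ζ) ξ̂(ζ; τ'))`,
because `p(τ; z) = p_O(τ; z) p(τ; z, ζ)` on `τ|_O = ζ`. This is symmetric under
`(z, τ) ↔ (ζ, τ')`, so the accepted moves are in detailed balance with respect to `π`, and the
rejected mass stays where it is.
-/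

open Finset

theorem Fintype.sum_mul_prod_erase {ι T R : Type*} [Fintype ι] [DecidableEq ι] [Fintype T]
    [CommSemiring R] (k : ι) (f : T → R) (g : ι → T → R) :
    ∑ t : ι → T, f (t k) * ∏ i ∈ univ.erase k, g i (t i)
      = (∑ τ, f τ) * ∏ i ∈ univ.erase k, ∑ τ, g i τ := by
  have hupdate : ∀ t : ι → T, f (t k) * ∏ i ∈ univ.erase k, g i (t i)
      = ∏ i, Function.update g k f i (t i) := by
    intro t
    rw [← mul_prod_erase _ _ (mem_univ k), Function.update_self]
    refine congrArg _ (Finset.prod_congr rfl fun i hi => ?_)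
    rw [Function.update_of_ne (ne_of_mem_erase hi)]
  rw [Fintype.sum_congr _ _ hupdate, ← Fintype.prod_sum, ← mul_prod_erase _ _ (mem_univ k),
    Function.update_self]
  refine congrArg _ (Finset.prod_congr rfl fun i hi => ?_)
  rw [Function.update_of_ne (ne_of_mem_erase hi)]

theorem mul_min_one_div {x y : ℝ} (hx : 0 ≤ x) (hy : 0 ≤ y) : x * min 1 (y / x) = min x y := by
  rcases hx.eq_or_lt with rfl | hx
  · simp [hy]
  · rw [mul_min_of_nonneg _ _ hx.le, mul_one, mul_div_cancel₀ _ hx.ne']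

section MetropolisHastings

variable {Z : Type*} [Fintype Z] [DecidableEq Z]

theorem sum_mul_accept_add_reject_of_detailed_balance (π : Z → ℝ) (a : Z → Z → ℝ)
    (hdb : ∀ z ζ, π z * a z ζ = π ζ * a ζ z) (z' : Z) :
    ∑ z, π z * (a z z' + (if z = z' then 1 else 0) * (1 - ∑ ζ, a z ζ)) = π z' := by
  simp only [mul_add, sum_add_distrib, hdb _ z', ← mul_sum, ite_mul, one_mul, zero_mul,
    mul_ite, mul_zero, sum_ite_eq', mem_univ, if_true]
  ring

theorem sum_proposal_mul_accept_reject_eq {Ω : Type*} [Fintype Ω] (q α : Z → Z → Ω → ℝ) (z z' : Z)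
    (hq : ∑ ζ, ∑ ω, q z ζ ω = 1) :
    ∑ ζ, ∑ ω, q z ζ ω * ((if ζ = z' then 1 else 0) * α z ζ ω
        + (if z = z' then 1 else 0) * (1 - α z ζ ω))
      = ∑ ω, q z z' ω * α z z' ω
        + (if z = z' then 1 else 0) * (1 - ∑ ζ, ∑ ω, q z ζ ω * α z ζ ω) := by
  have hsplit : ∀ ζ ω, q z ζ ω * ((if ζ = z' then 1 else 0) * α z ζ ω
        + (if z = z' then 1 else 0) * (1 - α z ζ ω))
      = (if ζ = z' then q z ζ ω * α z ζ ω else 0)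
        + (if z = z' then 1 else 0) * (q z ζ ω - q z ζ ω * α z ζ ω) := by
    intro ζ ω; split_ifs <;> ring
  simp only [hsplit, sum_add_distrib, ← mul_sum, sum_sub_distrib, hq, sum_ite_irrel,
    sum_const_zero, sum_ite_eq', mem_univ, if_true]

end MetropolisHastings

namespace EstimatedProposalMH

variable {Z T : Type*} {K : ℕ}

/-- The estimate `ξ̂` of the proposal probability. -/
noncomputable def proposalEstimate (pO : Z → T → ℝ) (x : Z) (t : Fin K → T) : ℝ :=
  (K : ℝ)⁻¹ * ∑ j, pO x (t j)

/-- Joint law of `(ζ, k, τ, τ')` drawn by SIMULATE and ASSESS from the current state `z`. -/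
noncomputable def auxDensity [DecidableEq Z] (out : T → Z) (pp : Z → T → ℝ)
    (pc : Z → Z → T → ℝ) (z ζ : Z) (k : Fin K) (t t' : Fin K → T) : ℝ :=
  (K : ℝ)⁻¹ * pp z (t k) * (if out (t k) = ζ then 1 else 0)
    * (∏ i ∈ univ.erase k, pc z ζ (t i)) * ∏ j, pc ζ z (t' j)

noncomputable def acceptProb (pi : Z → ℝ) (c : ℝ) (pO : Z → T → ℝ) (z ζ : Z)
    (t t' : Fin K → T) : ℝ :=
  min 1 ((c * pi ζ) * proposalEstimate pO ζ t' / ((c * pi z) * proposalEstimate pO z t))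

theorem proposalEstimate_nonneg {pO : Z → T → ℝ} (hpO : ∀ x τ, 0 ≤ pO x τ) (x : Z)
    (t : Fin K → T) : 0 ≤ proposalEstimate pO x t :=
  mul_nonneg (by positivity) (sum_nonneg fun j _ => hpO x (t j))

variable [DecidableEq Z] {out : T → Z} {pp : Z → T → ℝ} {pc : Z → Z → T → ℝ} {pO : Z → T → ℝ}

theorem pp_mul_indicator_mul_prod_erase (hpc_nonneg : ∀ x w τ, 0 ≤ pc x w τ)
    (hpc_supp : ∀ x w τ, 0 < pc x w τ → out τ = w)
    (hfact : ∀ x w τ, out τ = w → pp x τ = pO x τ * pc x w τ)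
    (z ζ : Z) (t : Fin K → T) (k : Fin K) :
    pp z (t k) * (if out (t k) = ζ then 1 else 0) * ∏ i ∈ univ.erase k, pc z ζ (t i)
      = pO z (t k) * ∏ i, pc z ζ (t i) := by
  rw [← mul_prod_erase _ _ (mem_univ k)]
  -- off the support both sides vanish, since then `pc z ζ (t k) = 0`
  by_cases h : out (t k) = ζ
  · rw [if_pos h, hfact z ζ (t k) h]
    ring
  · have hzero : pc z ζ (t k) = 0 :=
      ((hpc_nonneg z ζ (t k)).eq_or_lt.resolve_right (mt (hpc_supp z ζ (t k)) h)).symm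
    rw [if_neg h, hzero]
    ring

theorem sum_auxDensity (hpc_nonneg : ∀ x w τ, 0 ≤ pc x w τ)
    (hpc_supp : ∀ x w τ, 0 < pc x w τ → out τ = w)
    (hfact : ∀ x w τ, out τ = w → pp x τ = pO x τ * pc x w τ)
    (z ζ : Z) (t t' : Fin K → T) :
    ∑ k, auxDensity out pp pc z ζ k t t'
      = proposalEstimate pO z t * (∏ i, pc z ζ (t i)) * ∏ j, pc ζ z (t' j) := by
  have hk : ∀ k, auxDensity out pp pc z ζ k t t'
      = (K : ℝ)⁻¹ * pO z (t k) * (∏ i, pc z ζ (t i)) * ∏ j, pc ζ z (t' j) := by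
    intro k
    rw [auxDensity, mul_assoc _ (pp z (t k)), mul_assoc _ (pp z (t k) * _),
      pp_mul_indicator_mul_prod_erase hpc_nonneg hpc_supp hfact]
    ring
  simp only [hk, ← sum_mul, ← mul_sum]
  rfl

theorem pi_mul_sum_auxDensity_mul_acceptProb {pi : Z → ℝ} {c : ℝ} (hc : c ≠ 0)
    (hpi : ∀ z, 0 ≤ pi z) (hpO : ∀ x τ, 0 ≤ pO x τ) (hpc_nonneg : ∀ x w τ, 0 ≤ pc x w τ)
    (hpc_supp : ∀ x w τ, 0 < pc x w τ → out τ = w)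
    (hfact : ∀ x w τ, out τ = w → pp x τ = pO x τ * pc x w τ)
    (z ζ : Z) (t t' : Fin K → T) :
    pi z * ∑ k, auxDensity out pp pc z ζ k t t' * acceptProb pi c pO z ζ t t'
      = (∏ i, pc z ζ (t i)) * (∏ j, pc ζ z (t' j))
        * min (pi z * proposalEstimate pO z t) (pi ζ * proposalEstimate pO ζ t') := by
  rw [← sum_mul, sum_auxDensity hpc_nonneg hpc_supp hfact, acceptProb, mul_assoc c,
    mul_assoc c, mul_div_mul_left _ _ hc, ← mul_min_one_div
      (mul_nonneg (hpi z) (proposalEstimate_nonneg hpO z t))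
      (mul_nonneg (hpi ζ) (proposalEstimate_nonneg hpO ζ t'))]
  ring

variable [Fintype T]

theorem detailed_balance {pi : Z → ℝ} {c : ℝ} (hc : c ≠ 0)
    (hpi : ∀ z, 0 ≤ pi z) (hpO : ∀ x τ, 0 ≤ pO x τ) (hpc_nonneg : ∀ x w τ, 0 ≤ pc x w τ)
    (hpc_supp : ∀ x w τ, 0 < pc x w τ → out τ = w)
    (hfact : ∀ x w τ, out τ = w → pp x τ = pO x τ * pc x w τ) (z ζ : Z) :
    pi z * ∑ k : Fin K, ∑ t, ∑ t',
        auxDensity out pp pc z ζ k t t' * acceptProb pi c pO z ζ t t'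
      = pi ζ * ∑ k : Fin K, ∑ t, ∑ t',
        auxDensity out pp pc ζ z k t t' * acceptProb pi c pO ζ z t t' := by
  have hflux : ∀ a b, pi a * ∑ k : Fin K, ∑ t, ∑ t',
      auxDensity out pp pc a b k t t' * acceptProb pi c pO a b t t'
      = ∑ t : Fin K → T, ∑ t' : Fin K → T, (∏ i, pc a b (t i)) * (∏ j, pc b a (t' j))
          * min (pi a * proposalEstimate pO a t) (pi b * proposalEstimate pO b t') := by
    intro a b
    rw [sum_comm, mul_sum]
    refine sum_congr rfl fun t _ => ?_
    rw [sum_comm, mul_sum]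
    refine sum_congr rfl fun t' _ => ?_
    exact pi_mul_sum_auxDensity_mul_acceptProb hc hpi hpO hpc_nonneg hpc_supp hfact a b t t'
  rw [hflux, hflux, sum_comm]
  refine sum_congr rfl fun t' _ => sum_congr rfl fun t _ => ?_
  rw [min_comm]
  ring

variable [Fintype Z]

theorem sum_auxDensity_eq_one (hK : 0 < K) (hpp_sum : ∀ x, ∑ τ, pp x τ = 1)
    (hpc_sum : ∀ x w, ∑ τ, pc x w τ = 1) (z : Z) :
    ∑ ζ, ∑ k : Fin K, ∑ t : Fin K → T, ∑ t' : Fin K → T,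
      auxDensity out pp pc z ζ k t t' = 1 := by
  have hK' : (K : ℝ) ≠ 0 := by positivity
  have hsum : ∀ ζ k, ∑ t : Fin K → T, ∑ t' : Fin K → T, auxDensity out pp pc z ζ k t t'
      = (K : ℝ)⁻¹ * ∑ τ, pp z τ * (if out τ = ζ then 1 else 0) := by
    intro ζ k
    simp only [auxDensity, ← mul_sum, ← Fintype.prod_sum, hpc_sum, prod_const_one, mul_one,
      mul_assoc]
    rw [Fintype.sum_congr _ _ fun t => (mul_assoc _ _ _).symm,
      Fintype.sum_mul_prod_erase k (fun τ => pp z τ * if out τ = ζ then 1 else 0) fun _ => pc z ζ]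
    simp only [hpc_sum, prod_const_one, mul_one]
  simp only [hsum, sum_const, card_univ, Fintype.card_fin, nsmul_eq_mul, ← mul_assoc,
    mul_inv_cancel₀ hK', one_mul]
  rw [sum_comm]
  simp [hpp_sum]

end EstimatedProposalMH

open EstimatedProposalMH

theorem stmt11_algorithm2_stationary_general
    {Z T : Type} [Fintype Z] [Fintype T] [DecidableEq Z]
    (K : ℕ) (hK : 0 < K)
    (pi : Z → ℝ) (c : ℝ) (hc : 0 < c)
    (out : T → Z)
    (pp : Z → T → ℝ) (pc : Z → Z → T → ℝ) (pO : Z → T → ℝ)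
    (hpi_pos : ∀ z, 0 < pi z)
    (hpp_sum : ∀ x, ∑ τ, pp x τ = 1)
    (hpc_nonneg : ∀ x w τ, 0 ≤ pc x w τ) (hpc_sum : ∀ x w, ∑ τ, pc x w τ = 1)
    (hpc_supp : ∀ x w τ, 0 < pc x w τ → out τ = w)
    (hpO_pos : ∀ x τ, 0 < pO x τ)
    (hfact : ∀ x w τ, out τ = w → pp x τ = pO x τ * pc x w τ) :
    ∀ z' : Z,
      ∑ z, pi z *
        (∑ ζ, ∑ k : Fin K, ∑ t : Fin K → T, ∑ t' : Fin K → T,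
          ((K : ℝ)⁻¹ * pp z (t k) * (if out (t k) = ζ then 1 else 0)
              * (∏ i ∈ Finset.univ.erase k, pc z ζ (t i))
              * (∏ j, pc ζ z (t' j)))
            * ((if ζ = z' then 1 else 0)
                  * min 1 ((c * pi ζ) * ((K : ℝ)⁻¹ * ∑ j, pO ζ (t' j))
                      / ((c * pi z) * ((K : ℝ)⁻¹ * ∑ j, pO z (t j))))
                + (if z = z' then 1 else 0)
                  * (1 - min 1 ((c * pi ζ) * ((K : ℝ)⁻¹ * ∑ j, pO ζ (t' j))
                      / ((c * pi z) * ((K : ℝ)⁻¹ * ∑ j, pO z (t j)))))))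
      = pi z' := by
  intro z'
  let q : Z → Z → Fin K × (Fin K → T) × (Fin K → T) → ℝ :=
    fun z ζ ω => auxDensity out pp pc z ζ ω.1 ω.2.1 ω.2.2
  let α : Z → Z → Fin K × (Fin K → T) × (Fin K → T) → ℝ :=
    fun z ζ ω => acceptProb pi c pO z ζ ω.2.1 ω.2.2
  have hmass : ∀ z, ∑ ζ, ∑ ω, q z ζ ω = 1 := fun z => by
    simpa only [q, Fintype.sum_prod_type] using sum_auxDensity_eq_one hK hpp_sum hpc_sum z
  rw [← sum_mul_accept_add_reject_of_detailed_balance pi _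
    (detailed_balance hc.ne' (fun z => (hpi_pos z).le) (fun x τ => (hpO_pos x τ).le)
      hpc_nonneg hpc_supp hfact) z']
  refine sum_congr rfl fun z _ => congrArg (pi z * ·) ?_
  have hstep := sum_proposal_mul_accept_reject_eq q α z z' (hmass z)
  simp only [q, α, Fintype.sum_prod_type] at hstep
  exact hstep

/-- Theorem 2: The transition operator of Algorithm 2
(Metropolis–Hastings using proposal-probability estimates) admits `π` as a
stationary distribution.  Given the previous iterate `z`, SIMULATE draws
`k ~ Uniform{1..K}`, `τ_k ~ p(·;z)`, sets `ζ = τ_k|_O`, draws `τ_i ~ p(·;z,ζ)`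
for `i ≠ k`, and returns `ξ̂' = (1/K)∑_j p_O(τ_j;z)`; ASSESS draws
`τ'_j ~ p(·;ζ,z)` for `j = 1..K` and returns `ξ̂_{t-1} = (1/K)∑_j p_O(τ'_j;ζ)`;
the move to `ζ` is accepted with probability
`min{1, π̃(ζ)·ξ̂_{t-1} / (π̃(z)·ξ̂')}` where `π̃ = c·π`, `c > 0`.  Here
`pp x τ = p(τ;x)`, `pc x w τ = p(τ;x,w)` (supported on `out τ = w`),
`pp x τ = pO x τ · pc x w τ` for `out τ = w`, and all relevant probabilities are
positive.  The induced transition kernel `Tk z z'` (marginalizing `ζ, k, τ, τ'`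
and combining accept/reject) satisfies `∑_z π(z)·Tk z z' = π(z')`:
if `z_{t-1} ~ π` then `z_t ~ π`. -/
theorem stmt11_algorithm2_stationary
    {Z T : Type} [Fintype Z] [Fintype T] [DecidableEq Z]
    (K : ℕ) (hK : 0 < K)
    (pi : Z → ℝ) (c : ℝ) (hc : 0 < c)
    (out : T → Z)
    (pp : Z → T → ℝ) (pc : Z → Z → T → ℝ) (pO : Z → T → ℝ)
    (hpi_pos : ∀ z, 0 < pi z) (hpi_sum : ∑ z, pi z = 1)
    (hpp_pos : ∀ x τ, 0 < pp x τ) (hpp_sum : ∀ x, ∑ τ, pp x τ = 1)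
    (hpc_nonneg : ∀ x w τ, 0 ≤ pc x w τ) (hpc_sum : ∀ x w, ∑ τ, pc x w τ = 1)
    (hpc_supp : ∀ x w τ, 0 < pc x w τ → out τ = w)
    (hpc_pos : ∀ x w τ, out τ = w → 0 < pc x w τ)
    (hpO_pos : ∀ x τ, 0 < pO x τ)
    (hfact : ∀ x w τ, out τ = w → pp x τ = pO x τ * pc x w τ) :
    ∀ z' : Z,
      ∑ z, pi z *
        (∑ ζ, ∑ k : Fin K, ∑ t : Fin K → T, ∑ t' : Fin K → T,
          ((K : ℝ)⁻¹ * pp z (t k) * (if out (t k) = ζ then 1 else 0)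
              * (∏ i ∈ Finset.univ.erase k, pc z ζ (t i))
              * (∏ j, pc ζ z (t' j)))
            * ((if ζ = z' then 1 else 0)
                  * min 1 ((c * pi ζ) * ((K : ℝ)⁻¹ * ∑ j, pO ζ (t' j))
                      / ((c * pi z) * ((K : ℝ)⁻¹ * ∑ j, pO z (t j))))
                + (if z = z' then 1 else 0)
                  * (1 - min 1 ((c * pi ζ) * ((K : ℝ)⁻¹ * ∑ j, pO ζ (t' j))
                      / ((c * pi z) * ((K : ℝ)⁻¹ * ∑ j, pO z (t j)))))))
      = pi z' :=
  stmt11_algorithm2_stationary_general K hK pi c hc out pp pc pO hpi_pos hpp_sum hpc_nonneg hpc_sum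
    hpc_supp hpO_pos hfact
end

section
/- Monotonicity of the lower bound in K: for the unbiased estimator ξ̂_K = (1/K)Σ_{k=1}^K X_k where X_1, X_2, ... are i.i.d. positive random variables with E[X_1] = μ, the quantity L_K := E[log ξ̂_K] is nondecreasing in K and satisfies L_K ≤ log μ for all K ≥ 1. -/
/-!
The sample mean of `K + 1` draws is the average of its `K + 1` leave-one-out means, each of
which is a sample mean of `K` i.i.d. draws. Concavity of `log` (Jensen) bounds the log of this
average from below by the average of the logs, and taking expectations gives `L_K ≤ L_{K+1}`.
Jensen once more, applied to the unbiased sample mean, gives `L_K ≤ log μ`.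
-/

/-- The quantity `L_K = E[log((1/K)∑_{k<K} X_k)]` for i.i.d. draws from a finitely
supported distribution `ν` on `α`, with values `X : α → ℝ`. -/
noncomputable def Lb {α : Type} [Fintype α] (ν X : α → ℝ) (K : ℕ) : ℝ :=
  ∑ t : Fin K → α, (∏ k, ν (t k)) * Real.log ((K : ℝ)⁻¹ * ∑ k, X (t k))

open Finset

section iidExpect

variable {α : Type*} [Fintype α]

def iidExpect {R : Type*} [CommSemiring R] (ν : α → R) {n : ℕ} (F : (Fin n → α) → R) :
    R :=
  ∑ t, (∏ k, ν (t k)) * F t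

section CommSemiring

variable {R : Type*} [CommSemiring R] (ν : α → R)

theorem iidExpect_const (n : ℕ) (c : R) :
    iidExpect ν (fun _ : Fin n → α => c) = (∑ a, ν a) ^ n * c := by
  rw [iidExpect, ← sum_mul, Fintype.sum_pow]

theorem iidExpect_const_mul {n : ℕ} (c : R) (F : (Fin n → α) → R) :
    iidExpect ν (fun t => c * F t) = c * iidExpect ν F := by
  simp only [iidExpect, mul_sum, mul_left_comm]

theorem iidExpect_sum {ι : Type*} (s : Finset ι) {n : ℕ} (F : ι → (Fin n → α) → R) :
    iidExpect ν (fun t => ∑ i ∈ s, F i t) = ∑ i ∈ s, iidExpect ν (F i) := by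
  simp only [iidExpect, mul_sum]
  exact sum_comm

theorem iidExpect_eq_sum_insertNth {n : ℕ} (j : Fin (n + 1)) (F : (Fin (n + 1) → α) → R) :
    iidExpect ν F = ∑ a, ν a * iidExpect ν (fun s => F (j.insertNth a s)) := by
  rw [iidExpect, ← (Fin.insertNthEquiv (fun _ => α) j).sum_comp, Fintype.sum_prod_type]
  refine sum_congr rfl fun a _ => ?_
  simp only [iidExpect, mul_sum, Fin.insertNthEquiv, Equiv.coe_fn_mk, Fin.prod_univ_succAbove _ j,
    Fin.insertNth_apply_same, Fin.insertNth_apply_succAbove, mul_assoc]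

variable {ν}

theorem iidExpect_comp_succAbove (hν : ∑ a, ν a = 1) {n : ℕ} (j : Fin (n + 1))
    (F : (Fin n → α) → R) :
    iidExpect ν (fun t : Fin (n + 1) → α => F (t ∘ j.succAbove)) = iidExpect ν F := by
  simp only [iidExpect_eq_sum_insertNth ν j, Fin.insertNth_comp_succAbove, ← sum_mul, hν,
    one_mul]

theorem iidExpect_apply (hν : ∑ a, ν a = 1) {n : ℕ} (j : Fin n) (G : α → R) :
    iidExpect ν (fun t => G (t j)) = ∑ a, ν a * G a := by
  cases n with
  | zero => exact j.elim0
  | succ n =>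
    simp only [iidExpect_eq_sum_insertNth ν j, Fin.insertNth_apply_same, iidExpect_const, hν,
      one_pow, one_mul]

end CommSemiring

theorem iidExpect_sampleMean {R : Type*} [Semifield R] [CharZero R] {ν : α → R}
    (hν : ∑ a, ν a = 1) {n : ℕ} (hn : n ≠ 0) (X : α → R) :
    iidExpect ν (fun t : Fin n → α => (n : R)⁻¹ * ∑ k, X (t k)) = ∑ a, ν a * X a := by
  simp only [iidExpect_const_mul, iidExpect_sum, iidExpect_apply hν, sum_const, card_univ,
    Fintype.card_fin, nsmul_eq_mul]
  field_simp

theorem Fin.sum_sum_succAbove {M : Type*} [AddCommGroup M] {n : ℕ} (x : Fin (n + 1) → M) :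
    ∑ j : Fin (n + 1), ∑ k, x (j.succAbove k) = n • ∑ k, x k := by
  have leave_one_out (j : Fin (n + 1)) : ∑ k, x (j.succAbove k) = ∑ k, x k - x j :=
    eq_sub_of_add_eq' (Fin.sum_univ_succAbove x j).symm
  simp only [leave_one_out, sum_sub_distrib, sum_const, succ_nsmul, add_sub_cancel_right]

theorem sum_mul_log_le_log_sum_mul {ι : Type*} (s : Finset ι) {w p : ι → ℝ}
    (hw : ∀ i ∈ s, 0 ≤ w i) (hw₁ : ∑ i ∈ s, w i = 1) (hp : ∀ i ∈ s, 0 < p i) :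
    ∑ i ∈ s, w i * Real.log (p i) ≤ Real.log (∑ i ∈ s, w i * p i) := by
  simpa only [smul_eq_mul] using strictConcaveOn_log_Ioi.concaveOn.le_map_sum hw hw₁ hp

theorem avg_log_leaveOneOut_mean_le_log_mean {n : ℕ} (hn : n ≠ 0) {x : Fin (n + 1) → ℝ}
    (hx : ∀ k, 0 < x k) :
    ((n : ℝ) + 1)⁻¹ * ∑ j : Fin (n + 1), Real.log ((n : ℝ)⁻¹ * ∑ k, x (j.succAbove k))
      ≤ Real.log (((n : ℝ) + 1)⁻¹ * ∑ k, x k) := by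
  have mean_of_means :
      ∑ j : Fin (n + 1), ((n : ℝ) + 1)⁻¹ * ((n : ℝ)⁻¹ * ∑ k, x (j.succAbove k))
        = ((n : ℝ) + 1)⁻¹ * ∑ k, x k := by
    rw [← mul_sum, ← mul_sum, Fin.sum_sum_succAbove, nsmul_eq_mul, inv_mul_cancel_left₀]
    exact_mod_cast hn
  rw [mul_sum, ← mean_of_means]
  refine sum_mul_log_le_log_sum_mul _ (fun _ _ => by positivity) ?_ fun j _ => ?_
  · simp only [sum_const, card_univ, Fintype.card_fin, nsmul_eq_mul]
    push_cast
    exact mul_inv_cancel₀ (by positivity)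
  · have : 0 < ∑ k, x (j.succAbove k) :=
      sum_pos (fun k _ => hx _) (univ_nonempty_iff.mpr ⟨⟨0, by omega⟩⟩)
    positivity

section Real

variable {ν : α → ℝ} (hν₀ : ∀ a, 0 ≤ ν a) (hν₁ : ∑ a, ν a = 1)
include hν₀

theorem iidExpect_mono {n : ℕ} {F G : (Fin n → α) → ℝ} (h : ∀ t, F t ≤ G t) :
    iidExpect ν F ≤ iidExpect ν G :=
  sum_le_sum fun t _ => mul_le_mul_of_nonneg_left (h t) (prod_nonneg fun _ _ => hν₀ _)

include hν₁

theorem iidExpect_log_le_log_iidExpect {n : ℕ} {F : (Fin n → α) → ℝ}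
    (hF : ∀ t, 0 < F t) :
    iidExpect ν (fun t => Real.log (F t)) ≤ Real.log (iidExpect ν F) := by
  refine sum_mul_log_le_log_sum_mul _ (fun t _ => prod_nonneg fun _ _ => hν₀ _) ?_
    fun t _ => hF t
  simpa only [iidExpect, mul_one, hν₁, one_pow] using iidExpect_const ν n 1

end Real

end iidExpect

section Lb

variable {α : Type} [Fintype α] {ν X : α → ℝ}

theorem Lb_eq_iidExpect (K : ℕ) :
    Lb ν X K = iidExpect ν (fun t : Fin K → α => Real.log ((K : ℝ)⁻¹ * ∑ k, X (t k))) :=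
  rfl

variable (hν₀ : ∀ a, 0 ≤ ν a) (hν₁ : ∑ a, ν a = 1)
include hν₀ hν₁

theorem Lb_le_log_mean (hX : ∀ a, 0 < X a) {K : ℕ} (hK : K ≠ 0) :
    Lb ν X K ≤ Real.log (∑ a, ν a * X a) := by
  have sampleMean_pos (t : Fin K → α) : 0 < (K : ℝ)⁻¹ * ∑ k, X (t k) := by
    have : 0 < ∑ k, X (t k) :=
      sum_pos (fun k _ => hX _) (univ_nonempty_iff.mpr ⟨⟨0, by omega⟩⟩)
    positivity
  rw [Lb_eq_iidExpect, ← iidExpect_sampleMean hν₁ hK]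
  exact iidExpect_log_le_log_iidExpect hν₀ hν₁ sampleMean_pos

theorem Lb_le_Lb_succ (hX : ∀ a, 0 < X a) {K : ℕ} (hK : K ≠ 0) :
    Lb ν X K ≤ Lb ν X (K + 1) := by
  calc Lb ν X K
      = iidExpect ν (fun t : Fin (K + 1) → α => ((K : ℝ) + 1)⁻¹ *
          ∑ j : Fin (K + 1), Real.log ((K : ℝ)⁻¹ * ∑ k, X (t (j.succAbove k)))) := by
        have marginal (j : Fin (K + 1)) :
            iidExpect ν (fun t : Fin (K + 1) → α =>
              Real.log ((K : ℝ)⁻¹ * ∑ k, X (t (j.succAbove k)))) = Lb ν X K :=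
          iidExpect_comp_succAbove hν₁ j fun s => Real.log ((K : ℝ)⁻¹ * ∑ k, X (s k))
        rw [iidExpect_const_mul, iidExpect_sum]
        simp only [marginal, sum_const, card_univ, Fintype.card_fin, nsmul_eq_mul]
        push_cast
        field_simp
    _ ≤ iidExpect ν (fun t : Fin (K + 1) → α =>
          Real.log (((K : ℝ) + 1)⁻¹ * ∑ k, X (t k))) :=
        iidExpect_mono hν₀ fun t =>
          avg_log_leaveOneOut_mean_le_log_mean hK (x := X ∘ t) fun k => hX (t k)
    _ = Lb ν X (K + 1) := by
        rw [Lb_eq_iidExpect, Nat.cast_succ]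

end Lb

/-- Monotonicity of the lower bound in `K`.  For the unbiased
estimator `ξ̂_K = (1/K)∑_{k=1}^K X_k` where `X_1, X_2, …` are i.i.d. positive
random variables (finitely many positive values, drawn from pmf `ν`) with mean
`μ = ∑_a ν(a) X(a)`, the quantity `L_K = E[log ξ̂_K]` is nondecreasing in `K`
and satisfies `L_K ≤ log μ` for all `K ≥ 1`. -/
theorem stmt14_lower_bound_monotone
    {α : Type} [Fintype α] (ν X : α → ℝ)
    (hν_nonneg : ∀ a, 0 ≤ ν a)
    (hν_sum : ∑ a, ν a = 1)
    (hX_pos : ∀ a, 0 < X a) :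
    ∀ K : ℕ, 0 < K →
      Lb ν X K ≤ Lb ν X (K + 1) ∧ Lb ν X K ≤ Real.log (∑ a, ν a * X a) := by
  intro K hK
  exact ⟨Lb_le_Lb_succ hν_nonneg hν_sum hX_pos hK.ne',
    Lb_le_log_mean hν_nonneg hν_sum hX_pos hK.ne'⟩
end

section
/- Unbiasedness of the gradient estimator: with τ_{1:K} i.i.d. from p(·;x,θ,z), the estimator g + h, where g = Σ_k (log ξ̂(τ_{1:K}) − log ξ̂(τ_{−k})) ∇_θ log p_I(τ_k;x,θ) and h = ∇_θ log ξ̂(τ_{1:K}) (with ξ̂(τ_{1:K}) = (1/K)Σ_k p_O(τ_k;x,θ) and ξ̂(τ_{−k}) = (1/(K−1))Σ_{j≠k} p_O(τ_j;x,θ)), satisfies E[g + h] = ∇_θ E_{τ_{1:K}}[log ξ̂(τ_{1:K})]. -/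
/-!
Differentiating `E[log ξ̂] = ∑_t (∏_k p_I(t_k)) log ξ̂(t)` by the product rule gives `E[h]` plus the
score-function term `E[log ξ̂ · ∑_k ∇ log p_I(τ_k)]`, because the gradient of `∏_k p_I(t_k)` is that
product times `∑_k ∇ log p_I(t_k)`. The estimator `g` differs from this term by the baselines
`E[log ξ̂(τ_{-k}) ∇ log p_I(τ_k)]`, and each of them vanishes: `ξ̂(τ_{-k})` does not depend on `τ_k`,
so summing over `τ_k` first leaves `∑_τ p_I(τ) ∇ log p_I(τ) = ∇ ∑_τ p_I(τ) = 0`.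
-/

open Finset Filter Topology

section Baseline

variable {ι T M : Type*} [Fintype ι] [DecidableEq ι] [Fintype T] [AddCommGroup M] [Module ℝ M]

lemma sum_smul_apply_eq_zero_of_update_invariant (k : ι) (w : (ι → T) → ℝ)
    (hw : ∀ t a, w (Function.update t k a) = w t) (v : T → M) (hv : ∑ a, v a = 0) :
    ∑ t : ι → T, w t • v (t k) = 0 := by
  rcases isEmpty_or_nonempty T with hT | ⟨⟨a₀⟩⟩
  · have : IsEmpty (ι → T) := ⟨fun t => hT.false (t k)⟩
    exact Fintype.sum_empty _
  have hsplit : ∀ a r, (Equiv.funSplitAt k T).symm (a, r)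
      = Function.update ((Equiv.funSplitAt k T).symm (a₀, r)) k a := by
    intro a r
    ext j
    by_cases hj : j = k
    · subst hj; simp
    · simp [hj]
  rw [← (Equiv.funSplitAt k T).symm.sum_comp, Fintype.sum_prod_type_right]
  refine sum_eq_zero fun r _ => ?_
  calc _ = ∑ a, w ((Equiv.funSplitAt k T).symm (a₀, r)) • v a :=
        sum_congr rfl fun a _ => by rw [hsplit, hw, Function.update_self]
    _ = 0 := by rw [← smul_sum, hv, smul_zero]

lemma sum_prod_smul_sum_smul_eq_zero (p : T → ℝ) (s : T → M) (hs : ∑ a, p a • s a = 0)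
    (b : ι → (ι → T) → ℝ) (hb : ∀ k t a, b k (Function.update t k a) = b k t) :
    ∑ t : ι → T, (∏ j, p (t j)) • ∑ k, b k t • s (t k) = 0 := by
  simp_rw [smul_sum]
  rw [sum_comm]
  refine sum_eq_zero fun k _ => ?_
  have hfactor : ∀ t : ι → T, (∏ j, p (t j)) • (b k t • s (t k))
      = ((∏ j ∈ univ.erase k, p (t j)) * b k t) • (p (t k) • s (t k)) := by
    intro t
    rw [← mul_prod_erase univ _ (mem_univ k), smul_smul, smul_smul]
    ring_nf
  simp_rw [hfactor]
  refine sum_smul_apply_eq_zero_of_update_invariant k _ (fun t a => ?_) _ hs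
  rw [hb]
  congr 1
  exact prod_congr rfl fun j hj => by rw [Function.update_of_ne (ne_of_mem_erase hj)]

end Baseline

section LogDeriv

variable {E : Type*} [NormedAddCommGroup E] [NormedSpace ℝ E] {x : E}

lemma smul_fderiv_log {f : E → ℝ} (hf : DifferentiableAt ℝ f x) (hx : f x ≠ 0) :
    f x • fderiv ℝ (fun y => Real.log (f y)) x = fderiv ℝ f x := by
  rw [fderiv.log hf hx, smul_inv_smul₀ hx]

lemma hasFDerivAt_finsetProd_of_ne_zero {ι : Type*} [DecidableEq ι] {u : Finset ι} {f : ι → E → ℝ}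
    (hf : ∀ i ∈ u, DifferentiableAt ℝ (f i) x) (hx : ∀ i ∈ u, f i x ≠ 0) :
    HasFDerivAt (fun y => ∏ i ∈ u, f i y)
      ((∏ i ∈ u, f i x) • ∑ i ∈ u, fderiv ℝ (fun y => Real.log (f i y)) x) x := by
  refine (HasFDerivAt.finsetProd fun i hi => (hf i hi).hasFDerivAt).congr_fderiv ?_
  rw [smul_sum]
  refine sum_congr rfl fun i hi => ?_
  rw [← smul_fderiv_log (hf i hi) (hx i hi), smul_smul, ← mul_prod_erase u _ hi, mul_comm]

lemma sum_smul_fderiv_log_eq_zero {T : Type*} [Fintype T] {p : E → T → ℝ} {c : ℝ}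
    (hsum : (fun y => ∑ τ, p y τ) =ᶠ[𝓝 x] fun _ => c) (hp : ∀ τ, p x τ ≠ 0)
    (hd : ∀ τ, DifferentiableAt ℝ (fun y => p y τ) x) :
    ∑ τ, p x τ • fderiv ℝ (fun y => Real.log (p y τ)) x = 0 := by
  simp_rw [smul_fderiv_log (hd _) (hp _)]
  rw [← fderiv_fun_sum fun τ _ => hd τ, hsum.fderiv_eq, fderiv_const_apply]

lemma hasFDerivAt_sum_prod_mul {ι T : Type*} [Fintype ι] [DecidableEq ι] [Fintype T]
    {p : E → T → ℝ} {F : (ι → T) → E → ℝ} (hp : ∀ τ, p x τ ≠ 0)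
    (hpd : ∀ τ, DifferentiableAt ℝ (fun y => p y τ) x) (hF : ∀ t, DifferentiableAt ℝ (F t) x) :
    HasFDerivAt (fun y => ∑ t : ι → T, (∏ k, p y (t k)) * F t y)
      (∑ t : ι → T, (∏ k, p x (t k)) •
        (fderiv ℝ (F t) x + ∑ k, F t x • fderiv ℝ (fun y => Real.log (p y (t k))) x)) x := by
  refine (HasFDerivAt.fun_sum fun t _ =>
    (hasFDerivAt_finsetProd_of_ne_zero (fun k _ => hpd (t k)) fun k _ => hp (t k)).mul
      (hF t).hasFDerivAt).congr_fderiv (sum_congr rfl fun t _ => ?_)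
  rw [smul_add, smul_sum, smul_sum, smul_sum]
  exact congrArg _ (sum_congr rfl fun k _ => smul_comm _ _ _)

end LogDeriv

/-- Unbiasedness of the gradient estimator `g + h` of Algorithm 3.
Traces `τ` range over the finite support of `p(·;x,θ,z)`, whose pmf is
`pI θ τ = p_I(τ;x,θ)` (probability of the internal choices with outputs fixed to
`z`); `pO θ τ = p_O(τ;x,θ)` so that `p(τ;x,θ) = pO θ τ · pI θ τ`.  With
`τ_{1:K}` i.i.d. from `pI θ₀` (`K ≥ 2`),
`ξ̂(τ_{1:K}) = (1/K)∑_k pO θ (τ_k)` and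
`ξ̂(τ_{−k}) = (1/(K−1))∑_{j≠k} pO θ (τ_j)`, the estimator
`g + h`, where
`g = ∑_k (log ξ̂(τ_{1:K}) − log ξ̂(τ_{−k})) • ∇_θ log pI θ (τ_k)` and
`h = ∇_θ log ξ̂(τ_{1:K})`, satisfies
`E[g + h] = ∇_θ E_{τ_{1:K}}[log ξ̂(τ_{1:K})]` at `θ₀`. -/
theorem stmt16_gradient_estimator_unbiased
    {T : Type} [Fintype T] {d : ℕ}
    (K : ℕ) (hK : 2 ≤ K)
    (pI pO : (Fin d → ℝ) → T → ℝ)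
    (U : Set (Fin d → ℝ)) (hU : IsOpen U) (θ₀ : Fin d → ℝ) (hθ₀ : θ₀ ∈ U)
    (hI_sum : ∀ θ ∈ U, ∑ τ, pI θ τ = 1)
    (hI_pos : ∀ θ ∈ U, ∀ τ, 0 < pI θ τ)
    (hO_pos : ∀ θ ∈ U, ∀ τ, 0 < pO θ τ)
    (hI_diff : ∀ τ, DifferentiableAt ℝ (fun θ => pI θ τ) θ₀)
    (hO_diff : ∀ τ, DifferentiableAt ℝ (fun θ => pO θ τ) θ₀) :
    ∑ t : Fin K → T, (∏ k, pI θ₀ (t k)) •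
        ((∑ k, (Real.log ((K : ℝ)⁻¹ * ∑ j, pO θ₀ (t j))
              - Real.log (((K : ℝ) - 1)⁻¹ * ∑ j ∈ Finset.univ.erase k, pO θ₀ (t j)))
            • fderiv ℝ (fun θ => Real.log (pI θ (t k))) θ₀)
          + fderiv ℝ (fun θ => Real.log ((K : ℝ)⁻¹ * ∑ k, pO θ (t k))) θ₀)
      = fderiv ℝ (fun θ =>
          ∑ t : Fin K → T, (∏ k, pI θ (t k))
            * Real.log ((K : ℝ)⁻¹ * ∑ k, pO θ (t k))) θ₀ := by
  set P : (Fin K → T) → ℝ := fun t => ∏ k, pI θ₀ (t k)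
  set s : T → (Fin d → ℝ) →L[ℝ] ℝ := fun τ => fderiv ℝ (fun θ => Real.log (pI θ τ)) θ₀
  set L : (Fin K → T) → (Fin d → ℝ) → ℝ := fun t θ => Real.log ((K : ℝ)⁻¹ * ∑ k, pO θ (t k))
  set B : Fin K → (Fin K → T) → ℝ := fun k t =>
    Real.log (((K : ℝ) - 1)⁻¹ * ∑ j ∈ Finset.univ.erase k, pO θ₀ (t j))
  have hI_ne : ∀ τ, pI θ₀ τ ≠ 0 := fun τ => (hI_pos θ₀ hθ₀ τ).ne'
  have hscore : ∑ τ, pI θ₀ τ • s τ = 0 :=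
    sum_smul_fderiv_log_eq_zero (eventually_of_mem (hU.mem_nhds hθ₀) hI_sum) hI_ne hI_diff
  have hL : ∀ t, DifferentiableAt ℝ (L t) θ₀ := fun t =>
    have : Nonempty (Fin K) := ⟨⟨0, by omega⟩⟩
    ((DifferentiableAt.fun_sum fun k _ => hO_diff (t k)).const_mul _).log <|
      (mul_pos (inv_pos.mpr (Nat.cast_pos.mpr (by omega)))
        (sum_pos (fun k _ => hO_pos θ₀ hθ₀ (t k)) univ_nonempty)).ne'
  have hbaseline : ∑ t, P t • ∑ k, B k t • s (t k) = 0 :=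
    sum_prod_smul_sum_smul_eq_zero _ s hscore B fun k t a => by
      simp only [B]
      congr 2
      exact sum_congr rfl fun j hj => by rw [Function.update_of_ne (ne_of_mem_erase hj)]
  calc _ = ∑ t, P t • (∑ k, (L t θ₀ - B k t) • s (t k) + fderiv ℝ (L t) θ₀) := rfl
    _ = ∑ t, P t • ((fderiv ℝ (L t) θ₀ + ∑ k, L t θ₀ • s (t k)) - ∑ k, B k t • s (t k)) := by
        refine sum_congr rfl fun t _ => congrArg _ ?_
        conv_rhs => rw [add_sub_assoc, ← sum_sub_distrib]
        rw [add_comm]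
        congr 1
        exact sum_congr rfl fun k _ => sub_smul (L t θ₀) (B k t) (s (t k))
    _ = ∑ t, P t • (fderiv ℝ (L t) θ₀ + ∑ k, L t θ₀ • s (t k)) := by
        simp only [smul_sub, sum_sub_distrib, hbaseline, sub_zero]
    _ = _ := (hasFDerivAt_sum_prod_mul hI_ne hI_diff hL).fderiv.symm
end
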